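/- The set of solutions (p10, p12, p41, p43, p45, p119) ∈ ℚ^6 with all coordinates nonzero of the system p41 = p10^3·p12, p43 = p10^2·p12^2, p45 = p10·p12^3, p119 = p41·p43·p10^2·p12^3, p119 = p10^12, p119 = p12^10 is closed under componentwise multiplication and componentwise inversion, and forms a group of order exactly 2 (hence isomorphic to ℤ/2ℤ) with identity (1,1,1,1,1,1) and the unique nontrivial element (1,−1,−1,1,−1,1). -/

import Mathlib

/-!
Write `a = p10`, `b = p12`. Substituting the first three equations into the fourth gives
`p119 = a ^ 7 * b ^ 6`, so the system reduces to `a ^ 5 = b ^ 6` and `a ^ 12 = b ^ 10`.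
These force `a ^ 72 = b ^ 60 = a ^ 50`, hence `a ^ 22 = 1`; the only roots of unity in `ℚ`
are `±1`, and `a = -1` would make `b ^ 6` negative. So `a = 1`, `b ^ 6 = 1`, `b = ±1`, and the
solutions are the two powers of `(1, -1, -1, 1, -1, 1)`, an element of order two.
-/

open Subgroup

lemma pow_22_eq_one_of_pow_5_eq_of_pow_12_eq {M : Type*} [LeftCancelMonoid M] {a b : M}
    (h₅ : a ^ 5 = b ^ 6) (h₁₂ : a ^ 12 = b ^ 10) : a ^ 22 = 1 := by
  have h : a ^ 50 * a ^ 22 = a ^ 50 :=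
    calc a ^ 50 * a ^ 22 = (a ^ 12) ^ 6 := by rw [← pow_add, ← pow_mul]
      _ = (b ^ 6) ^ 10 := by rw [h₁₂, ← pow_mul, ← pow_mul]
      _ = a ^ 50 := by rw [← h₅, ← pow_mul]
  exact mul_eq_left.mp h

lemma Subgroup.coe_zpowers_of_sq_eq_one {G : Type*} [Group G] {g : G} (hg : g ^ 2 = 1) :
    (zpowers g : Set G) = {1, g} := by
  ext x
  simp only [SetLike.mem_coe, mem_zpowers_iff, Set.mem_insert_iff, Set.mem_singleton_iff]
  constructor
  · rintro ⟨k, rfl⟩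
    rw [zpow_eq_zpow_emod' k hg]
    rcases Int.emod_two_eq_zero_or_one k with h | h <;> simp [h]
  · rintro (rfl | rfl)
    exacts [⟨0, zpow_zero _⟩, ⟨1, zpow_one _⟩]

namespace Units

variable {R : Type*} [Ring R] [LinearOrder R] [IsStrictOrderedRing R]

lemma pow_eq_one_iff_of_ne_zero {u : Rˣ} {n : ℕ} (hn : n ≠ 0) :
    u ^ n = 1 ↔ u = 1 ∨ u = -1 ∧ Even n := by
  simp only [Units.ext_iff, val_pow_eq_pow_val, val_one, Units.val_neg,
    _root_.pow_eq_one_iff_of_ne_zero hn]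

lemma pow_ne_neg_one_of_even {u : Rˣ} {n : ℕ} (hn : Even n) : u ^ n ≠ -1 := by
  intro h
  have := hn.pow_nonneg (u : R)
  rw [← val_pow_eq_pow_val, h, Units.val_neg, val_one] at this
  exact neg_one_lt_zero.not_ge this

lemma eq_one_and_eq_one_or_eq_neg_one_of_pow_5_eq_of_pow_12_eq {a b : Rˣ}
    (h₅ : a ^ 5 = b ^ 6) (h₁₂ : a ^ 12 = b ^ 10) : a = 1 ∧ (b = 1 ∨ b = -1) := by
  rcases (pow_eq_one_iff_of_ne_zero (by norm_num)).mp
      (pow_22_eq_one_of_pow_5_eq_of_pow_12_eq h₅ h₁₂) with rfl | ⟨rfl, -⟩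
  · have hb : b ^ 6 = 1 := by rw [← h₅, one_pow]
    rcases (pow_eq_one_iff_of_ne_zero (by norm_num)).mp hb with hb | ⟨hb, -⟩
    exacts [⟨rfl, .inl hb⟩, ⟨rfl, .inr hb⟩]
  · exact absurd (by rw [← h₅]; norm_num) (pow_ne_neg_one_of_even (u := b) (by decide : Even 6))

end Units

/-- `p 0, …, p 5` stand for `p10, p12, p41, p43, p45, p119`. -/
def IsCoherent (p : Fin 6 → ℚˣ) : Prop :=
  p 2 = p 0 ^ 3 * p 1 ∧
  p 3 = p 0 ^ 2 * p 1 ^ 2 ∧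
  p 4 = p 0 * p 1 ^ 3 ∧
  p 5 = p 2 * p 3 * p 0 ^ 2 * p 1 ^ 3 ∧
  p 5 = p 0 ^ 12 ∧
  p 5 = p 1 ^ 10

def nontrivialSolution : Fin 6 → ℚˣ := ![1, -1, -1, 1, -1, 1]

lemma nontrivialSolution_sq : nontrivialSolution ^ 2 = 1 := by
  funext i; fin_cases i <;> simp [nontrivialSolution]

lemma nontrivialSolution_ne_one : nontrivialSolution ≠ 1 := fun h ↦ by
  have h := congrArg Units.val (congrFun h 1)
  norm_num [nontrivialSolution] at h

lemma isCoherent_iff (p : Fin 6 → ℚˣ) : IsCoherent p ↔ p = 1 ∨ p = nontrivialSolution := by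
  constructor
  · rintro ⟨h41, h43, h45, h119, h10, h12⟩
    have hsplit : p 0 ^ 7 * p 0 ^ 5 = p 0 ^ 7 * p 1 ^ 6 := by
      rw [← pow_add, ← h10, h119, h41, h43]; ext; push_cast; ring
    obtain ⟨ha, hb | hb⟩ := Units.eq_one_and_eq_one_or_eq_neg_one_of_pow_5_eq_of_pow_12_eq
      (mul_left_cancel hsplit) (h10.symm.trans h12)
    · left; funext i; fin_cases i <;> simp [*]
    · right; funext i
      fin_cases i <;> simp [*, nontrivialSolution, Odd.neg_one_pow (by decide : Odd 3)]
  · rintro (rfl | rfl)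
    · simp [IsCoherent]
    · simp [IsCoherent, nontrivialSolution, Odd.neg_one_pow (by decide : Odd 3),
        Even.neg_one_pow (by decide : Even 10)]

theorem stmt_1 :
    ∃ H : Subgroup (Fin 6 → ℚˣ),
      (H : Set (Fin 6 → ℚˣ)) =
        {p : Fin 6 → ℚˣ | p 2 = p 0 ^ 3 * p 1 ∧
        p 3 = p 0 ^ 2 * p 1 ^ 2 ∧
        p 4 = p 0 * p 1 ^ 3 ∧
        p 5 = p 2 * p 3 * p 0 ^ 2 * p 1 ^ 3 ∧
        p 5 = p 0 ^ 12 ∧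
        p 5 = p 1 ^ 10} ∧
      Nat.card H = 2 ∧
      (∀ x ∈ H, x * x = 1) ∧
      Nonempty (H ≃* Multiplicative (ZMod 2)) ∧
      (H : Set (Fin 6 → ℚˣ)) = {1, ![1, -1, -1, 1, -1, 1]} := by
  have hcoe := coe_zpowers_of_sq_eq_one nontrivialSolution_sq
  have hcard : Nat.card (zpowers nontrivialSolution) = 2 := by
    rw [Nat.card_zpowers, orderOf_eq_prime nontrivialSolution_sq nontrivialSolution_ne_one]
  refine ⟨zpowers nontrivialSolution, ?_, hcard, ?_, ⟨mulEquivOfPrimeCardEq hcard (by simp)⟩, hcoe⟩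
  · rw [hcoe]
    exact Set.ext fun p ↦ (isCoherent_iff p).symm
  · intro x hx
    rw [← SetLike.mem_coe, hcoe] at hx
    rcases hx with rfl | rfl
    exacts [mul_one 1, (sq _).symm.trans nontrivialSolution_sq]
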